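/- arXiv:1109.4777 — 2 statements merged into one kernel-verified Lean document; each statement's English description precedes it below -/
import Mathlib

section
/- Let V0 ~ Beta(1+α1, α2) and V1, V2 ~ Beta(1, α1) be independent, and set S1 = V0·V1, S2 = V0·V2. Then S1 and S2 each have the Beta(1, α1+α2) distribution. -/
/-! If `V ~ Beta(1, a)` then `P(V > s) = (1 - s) ^ a` for `0 ≤ s ≤ 1`, so conditioning on `V0 = x`
gives `P(V0 V1 > t) = E[(1 - t / V0) ^ a ; V0 > t]`. On `x > t` the Beta(1 + a, b) density times
`(1 - t / x) ^ a` equals `(1 - t) ^ (a + b - 1)` times the same density at `(x - t) / (1 - t)`, so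
an affine change of variables turns the expectation into `(1 - t) ^ (a + b)`, the survival function of
Beta(1, a + b). The case `a = 0` of the same identity computes the survival function of Beta(1, c)
used in the first step.
-/

open MeasureTheory ProbabilityTheory Real Filter

/-- The density of a Beta(a,b) random variable on (0,1). -/
noncomputable def betaPDFReal (a b x : ℝ) : ℝ :=
  if 0 < x ∧ x < 1 then
    (Real.Gamma (a + b) / (Real.Gamma a * Real.Gamma b)) * x ^ (a - 1) * (1 - x) ^ (b - 1)
  else 0

/-- The Beta(a,b) probability measure on ℝ. -/
noncomputable def betaMeasure (a b : ℝ) : Measure ℝ :=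
  MeasureTheory.volume.withDensity (fun x => ENNReal.ofReal (_root_.betaPDFReal a b x))

/-- `X` is a beta random variable with parameters `(a, b)` on `(Ω, μ)`. -/
def HasBetaLaw {Ω : Type*} [MeasurableSpace Ω] (μ : Measure Ω) (X : Ω → ℝ) (a b : ℝ) : Prop :=
  Measurable X ∧ μ.map X = _root_.betaMeasure a b

open Set
open scoped ENNReal

theorem lintegral_comp_sub_div (f : ℝ → ℝ≥0∞) (t : ℝ) {c : ℝ} (hc : 0 < c) :
    ∫⁻ x, f ((x - t) / c) = ENNReal.ofReal c * ∫⁻ x, f x := by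
  rw [lintegral_sub_right_eq_self (fun x => f (x / c)) t]
  have h := lintegral_map_equiv f (MeasurableEquiv.mulLeft₀ c⁻¹ (inv_ne_zero hc.ne')) (μ := volume)
  simp only [MeasurableEquiv.coe_mulLeft₀, Real.map_volume_mul_left (inv_ne_zero hc.ne'), inv_inv,
    abs_of_pos hc, lintegral_smul_measure] at h
  simpa [div_eq_inv_mul] using h.symm

namespace ProbabilityTheory

theorem ae_betaMeasure_mem_Ioo (α β : ℝ) : ∀ᵐ x ∂betaMeasure α β, x ∈ Ioo 0 1 := by
  refine (ae_withDensity_iff (by unfold betaPDF; fun_prop)).2 (ae_of_all _ fun x hx => ?_)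
  by_contra h
  rw [mem_Ioo, not_and_or, not_lt, not_lt] at h
  exact hx (h.elim betaPDF_eq_zero_of_nonpos betaPDF_eq_zero_of_one_le)

theorem betaMeasure_Ioi_of_one_le (α β : ℝ) {s : ℝ} (hs : 1 ≤ s) : betaMeasure α β (Ioi s) = 0 :=
  measure_eq_zero_iff_ae_notMem.2 <|
    (ae_betaMeasure_mem_Ioo α β).mono fun _ hx h => (hx.2.trans_le hs).not_gt h

theorem betaMeasure_Ioi_of_nonpos {α β : ℝ} (hα : 0 < α) (hβ : 0 < β) {s : ℝ} (hs : s ≤ 0) :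
    betaMeasure α β (Ioi s) = 1 := by
  have := isProbabilityMeasureBeta hα hβ
  rw [← measure_univ (μ := betaMeasure α β)]
  exact (ae_iff_measure_eq measurableSet_Ioi.nullMeasurableSet).1 <|
    (ae_betaMeasure_mem_Ioo α β).mono fun _ hx => hs.trans_lt hx.1

theorem lintegral_betaPDF_comp_sub_div {α β : ℝ} (hα : 0 < α) (hβ : 0 < β) (t : ℝ) {c : ℝ}
    (hc : 0 < c) :
    ∫⁻ x, betaPDF α β ((x - t) / c) = ENNReal.ofReal c := by
  rw [lintegral_comp_sub_div _ t hc, lintegral_betaPDF_eq_one hα hβ, mul_one]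

theorem betaPDF_one_add_mul_indicator (a b : ℝ) {t : ℝ} (ht0 : 0 ≤ t) (ht1 : t < 1) (x : ℝ) :
    betaPDF (1 + a) b x * (Ioi t).indicator (fun x => ENNReal.ofReal ((1 - t / x) ^ a)) x
      = ENNReal.ofReal ((1 - t) ^ (a + b - 1)) * betaPDF (1 + a) b ((x - t) / (1 - t)) := by
  have h1t : 0 < 1 - t := sub_pos.2 ht1
  rcases le_or_gt x t with hxt | hxt
  · rw [indicator_of_notMem (notMem_Ioi.2 hxt), mul_zero,
      betaPDF_eq_zero_of_nonpos (div_nonpos_of_nonpos_of_nonneg (sub_nonpos.2 hxt) h1t.le),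
      mul_zero]
  rcases le_or_gt 1 x with hx1 | hx1
  · rw [betaPDF_eq_zero_of_one_le hx1, zero_mul,
      betaPDF_eq_zero_of_one_le ((one_le_div h1t).2 (by linarith)), mul_zero]
  have hx0 : 0 < x := ht0.trans_lt hxt
  have hu0 : 0 < (x - t) / (1 - t) := div_pos (sub_pos.2 hxt) h1t
  have hu1 : (x - t) / (1 - t) < 1 := (div_lt_one h1t).2 (by linarith)
  have hxt' : x * (1 - t / x) = (1 - t) * ((x - t) / (1 - t)) := by field_simp
  have h1x : 1 - x = (1 - t) * (1 - (x - t) / (1 - t)) := by field_simp; ring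
  have hsub : 0 ≤ 1 - t / x := sub_nonneg.2 ((div_le_one hx0).2 hxt.le)
  rw [indicator_of_mem (mem_Ioi.2 hxt), betaPDF_of_pos_lt_one hx0 hx1,
    betaPDF_of_pos_lt_one hu0 hu1, ← ENNReal.ofReal_mul' (rpow_nonneg hsub a),
    ← ENNReal.ofReal_mul (rpow_nonneg h1t.le _)]
  congr 1
  rw [add_sub_cancel_left, add_sub_assoc, rpow_add h1t]
  calc 1 / beta (1 + a) b * x ^ a * (1 - x) ^ (b - 1) * (1 - t / x) ^ a
      = 1 / beta (1 + a) b * (x * (1 - t / x)) ^ a * (1 - x) ^ (b - 1) := by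
        rw [mul_rpow hx0.le hsub]; ring
    _ = (1 - t) ^ a * (1 - t) ^ (b - 1) * (1 / beta (1 + a) b * ((x - t) / (1 - t)) ^ a *
          (1 - (x - t) / (1 - t)) ^ (b - 1)) := by
        rw [hxt', h1x, mul_rpow h1t.le hu0.le, mul_rpow h1t.le (by linarith)]; ring

theorem lintegral_betaPDF_one_add_mul_indicator {a b : ℝ} (ha : 0 < 1 + a) (hb : 0 < b) {t : ℝ}
    (ht0 : 0 ≤ t) (ht1 : t < 1) :
    ∫⁻ x, betaPDF (1 + a) b x * (Ioi t).indicator (fun x => ENNReal.ofReal ((1 - t / x) ^ a)) x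
      = ENNReal.ofReal ((1 - t) ^ (a + b)) := by
  have h1t : 0 < 1 - t := sub_pos.2 ht1
  simp_rw [betaPDF_one_add_mul_indicator a b ht0 ht1]
  rw [lintegral_const_mul' _ _ ENNReal.ofReal_ne_top, lintegral_betaPDF_comp_sub_div ha hb t h1t,
    ← ENNReal.ofReal_mul (rpow_nonneg h1t.le _), ← rpow_add_one h1t.ne', sub_add_cancel]

theorem betaMeasure_one_Ioi {c : ℝ} (hc : 0 < c) {s : ℝ} (hs0 : 0 ≤ s) (hs1 : s < 1) :
    betaMeasure 1 c (Ioi s) = ENNReal.ofReal ((1 - s) ^ c) := by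
  have h := lintegral_betaPDF_one_add_mul_indicator (a := 0) (by norm_num) hc hs0 hs1
  simp only [add_zero, rpow_zero, ENNReal.ofReal_one, zero_add] at h
  rw [betaMeasure, withDensity_apply _ measurableSet_Ioi, ← lintegral_indicator measurableSet_Ioi,
    ← h]
  simp_rw [← indicator_mul_right, mul_one]

theorem betaMeasure_one_Ioi_div {a : ℝ} (ha : 0 < a) {t x : ℝ} (ht : 0 ≤ t) (hx : 0 < x) :
    betaMeasure 1 a (Ioi (t / x))
      = (Ioi t).indicator (fun x => ENNReal.ofReal ((1 - t / x) ^ a)) x := by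
  rcases le_or_gt x t with hxt | hxt
  · rw [indicator_of_notMem (notMem_Ioi.2 hxt),
      betaMeasure_Ioi_of_one_le _ _ ((one_le_div hx).2 hxt)]
  · rw [indicator_of_mem (mem_Ioi.2 hxt),
      betaMeasure_one_Ioi ha (div_nonneg ht hx.le) ((div_lt_one hx).2 hxt)]

theorem lintegral_betaMeasure_one_Ioi_div {a b : ℝ} (ha : 0 < a) (hb : 0 < b) (t : ℝ) :
    ∫⁻ x, betaMeasure 1 a (Ioi (t / x)) ∂betaMeasure (1 + a) b = betaMeasure 1 (a + b) (Ioi t) := by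
  have ha1 : 0 < 1 + a := by linarith
  have hIoo := ae_betaMeasure_mem_Ioo (1 + a) b
  rcases lt_or_ge t 0 with ht0 | ht0
  · have := isProbabilityMeasureBeta ha1 hb
    rw [betaMeasure_Ioi_of_nonpos one_pos (add_pos ha hb) ht0.le,
      lintegral_congr_ae (hIoo.mono fun x hx => betaMeasure_Ioi_of_nonpos one_pos ha
        (div_nonpos_of_nonpos_of_nonneg ht0.le hx.1.le)),
      lintegral_const, measure_univ, mul_one]
  rcases lt_or_ge t 1 with ht1 | ht1
  · rw [betaMeasure_one_Ioi (add_pos ha hb) ht0 ht1,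
      ← lintegral_betaPDF_one_add_mul_indicator ha1 hb ht0 ht1,
      lintegral_congr_ae (hIoo.mono fun x hx => betaMeasure_one_Ioi_div ha ht0 hx.1)]
    have hpdf : Measurable (betaPDF (1 + a) b) := (measurable_betaPDFReal _ _).ennreal_ofReal
    have hsurv : Measurable ((Ioi t).indicator fun x => ENNReal.ofReal ((1 - t / x) ^ a)) :=
      (Measurable.ennreal_ofReal (by fun_prop)).indicator measurableSet_Ioi
    exact lintegral_withDensity_eq_lintegral_mul _ hpdf hsurv
  · rw [betaMeasure_Ioi_of_one_le _ _ ht1,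
      lintegral_congr_ae (hIoo.mono fun x hx => betaMeasure_Ioi_of_one_le 1 a
        ((one_le_div hx.1).2 (hx.2.le.trans ht1))),
      lintegral_zero]

theorem map_mul_betaMeasure_prod {a b : ℝ} (ha : 0 < a) (hb : 0 < b) :
    ((betaMeasure (1 + a) b).prod (betaMeasure 1 a)).map (fun p => p.1 * p.2)
      = betaMeasure 1 (a + b) := by
  have := isProbabilityMeasureBeta (by linarith : (0 : ℝ) < 1 + a) hb
  have := isProbabilityMeasureBeta one_pos ha
  have := isProbabilityMeasureBeta one_pos (add_pos ha hb)
  have : IsProbabilityMeasure (((betaMeasure (1 + a) b).prod (betaMeasure 1 a)).map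
      (fun p => p.1 * p.2)) := Measure.isProbabilityMeasure_map (by fun_prop)
  refine Measure.ext_of_Iic _ _ fun t => ?_
  rw [← compl_Ioi, prob_compl_eq_one_sub measurableSet_Ioi, prob_compl_eq_one_sub measurableSet_Ioi,
    Measure.map_apply (by fun_prop) measurableSet_Ioi,
    Measure.prod_apply (measurableSet_Ioi.preimage (by fun_prop)),
    ← lintegral_betaMeasure_one_Ioi_div ha hb t]
  congr 1
  refine lintegral_congr_ae ((ae_betaMeasure_mem_Ioo _ _).mono fun x hx => ?_)
  refine congrArg _ (Set.ext fun y => ?_)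
  simp [div_lt_iff₀' hx.1]

end ProbabilityTheory

theorem betaMeasure_eq_probabilityTheory_betaMeasure (a b : ℝ) :
    _root_.betaMeasure a b = ProbabilityTheory.betaMeasure a b := by
  unfold _root_.betaMeasure ProbabilityTheory.betaMeasure betaPDF
  simp only [_root_.betaPDFReal, ProbabilityTheory.betaPDFReal, beta, one_div_div]

theorem HasBetaLaw.mul {Ω : Type*} [MeasurableSpace Ω] {μ : Measure Ω} [IsFiniteMeasure μ]
    {X Y : Ω → ℝ} {a b : ℝ} (ha : 0 < a) (hb : 0 < b) (hX : HasBetaLaw μ X (1 + a) b)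
    (hY : HasBetaLaw μ Y 1 a) (hXY : IndepFun X Y μ) :
    HasBetaLaw μ (fun ω => X ω * Y ω) 1 (a + b) := by
  refine ⟨hX.1.mul hY.1, ?_⟩
  have hjoint : μ.map (fun ω => (X ω, Y ω)) = (μ.map X).prod (μ.map Y) :=
    (indepFun_iff_map_prod_eq_prod_map_map hX.1.aemeasurable hY.1.aemeasurable).1 hXY
  rw [show (fun ω => X ω * Y ω) = (fun p : ℝ × ℝ => p.1 * p.2) ∘ (fun ω => (X ω, Y ω)) from rfl,
    ← Measure.map_map (by fun_prop) (hX.1.prodMk hY.1), hjoint, hX.2, hY.2]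
  simp only [betaMeasure_eq_probabilityTheory_betaMeasure, map_mul_betaMeasure_prod ha hb]

theorem betaProduct_H1_marginals {Ω : Type*} [MeasurableSpace Ω] (μ : Measure Ω)
    [IsProbabilityMeasure μ] (V0 V1 V2 : Ω → ℝ) (α1 α2 : ℝ) (hα1 : 0 < α1) (hα2 : 0 < α2)
    (h0 : HasBetaLaw μ V0 (1 + α1) α2) (h1 : HasBetaLaw μ V1 1 α1) (h2 : HasBetaLaw μ V2 1 α1)
    (hind : iIndepFun ![V0, V1, V2] μ) :
    HasBetaLaw μ (fun ω => V0 ω * V1 ω) 1 (α1 + α2) ∧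
      HasBetaLaw μ (fun ω => V0 ω * V2 ω) 1 (α1 + α2) :=
  ⟨h0.mul hα1 hα2 h1 (hind.indepFun (i := 0) (j := 1) (by decide)),
    h0.mul hα1 hα2 h2 (hind.indepFun (i := 0) (j := 2) (by decide))⟩
end

section
/- In the setting of the r-dimensional (H2) construction, for 1 ≤ i < j ≤ r, E[S_i·S_j] = 2 / ((2 + α1 + ··· + α_{r−j+1})(1 + α1 + ··· + α_{r−i+1})). -/
/-!
With `A k = 1 + α 1 + ⋯ + α k`, the stick `V k` is Beta(`A k`, `A (k+1) - A k`), so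
`E[V k ^ e] = ∏ l < e, (A k + l) / (A (k+1) + l)`. The product `S_i S_j` is `V k ^ 2` for
`k < m := r - j + 1` times `V k` for `m ≤ k < n := r - i + 1`; by independence its mean is the
product of these moments, and the products over `k` telescope to
`A 0 (A 0 + 1) / (A m (A m + 1)) * (A m / A n)` with `A 0 = 1`.
-/

open MeasureTheory ProbabilityTheory Real Filter

open Finset

lemma integral_Ioo_rpow_mul_one_sub_rpow {a b : ℝ} (ha : 0 < a) (hb : 0 < b) :
    ∫ x in Set.Ioo (0 : ℝ) 1, x ^ (a - 1) * (1 - x) ^ (b - 1) =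
      Gamma a * Gamma b / Gamma (a + b) := by
  have hB := Complex.Gamma_mul_Gamma_eq_betaIntegral (s := (a : ℂ)) (t := (b : ℂ))
    (by simpa using ha) (by simpa using hb)
  have hI : Complex.betaIntegral a b =
      ((∫ x in (0 : ℝ)..1, x ^ (a - 1) * (1 - x) ^ (b - 1) : ℝ) : ℂ) := by
    rw [Complex.betaIntegral, ← intervalIntegral.integral_ofReal]
    refine intervalIntegral.integral_congr fun x hx => ?_
    rw [Set.uIcc_of_le zero_le_one] at hx
    push_cast
    rw [Complex.ofReal_cpow hx.1, Complex.ofReal_cpow (by linarith [hx.2])]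
    push_cast
    ring
  rw [hI, Complex.Gamma_ofReal, Complex.Gamma_ofReal, ← Complex.ofReal_add,
    Complex.Gamma_ofReal, ← Complex.ofReal_mul, ← Complex.ofReal_mul] at hB
  rw [← integral_Ioc_eq_integral_Ioo, ← intervalIntegral.integral_of_le zero_le_one,
    eq_div_iff (Gamma_pos_of_pos (add_pos ha hb)).ne', mul_comm]
  exact (Complex.ofReal_injective hB).symm

lemma betaPDFReal_nonneg {a b : ℝ} (ha : 0 < a) (hb : 0 < b) (x : ℝ) :
    0 ≤ _root_.betaPDFReal a b x := by
  unfold _root_.betaPDFReal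
  split_ifs with hx
  · have := Gamma_pos_of_pos ha
    have := Gamma_pos_of_pos hb
    have := Gamma_pos_of_pos (add_pos ha hb)
    have := rpow_nonneg hx.1.le (a - 1)
    have := rpow_nonneg (sub_nonneg.2 hx.2.le) (b - 1)
    positivity
  · exact le_rfl

lemma integral_pow_betaMeasure_eq_Gamma {a b : ℝ} (ha : 0 < a) (hb : 0 < b) (m : ℕ) :
    ∫ x, x ^ m ∂(_root_.betaMeasure a b) =
      Gamma (a + m) * Gamma (a + b) / (Gamma a * Gamma (a + b + m)) := by
  have hdens : ∀ x, (ENNReal.ofReal (_root_.betaPDFReal a b x)).toReal • x ^ m =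
      Set.indicator (Set.Ioo 0 1) (fun x => Gamma (a + b) / (Gamma a * Gamma b) *
        (x ^ (a + m - 1) * (1 - x) ^ (b - 1))) x := by
    intro x
    rw [ENNReal.toReal_ofReal (betaPDFReal_nonneg ha hb x), smul_eq_mul, _root_.betaPDFReal]
    by_cases hx : 0 < x ∧ x < 1
    · rw [if_pos hx, Set.indicator_of_mem (show x ∈ Set.Ioo 0 1 from hx), ← rpow_natCast,
        show a + m - 1 = a - 1 + m by ring, rpow_add hx.1]
      ring
    · rw [if_neg hx, Set.indicator_of_notMem (show x ∉ Set.Ioo 0 1 from hx), zero_mul]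
  have hmeas : Measurable (_root_.betaPDFReal a b) :=
    Measurable.ite measurableSet_Ioo (by fun_prop) measurable_const
  rw [_root_.betaMeasure, integral_withDensity_eq_integral_toReal_smul hmeas.ennreal_ofReal
      (Filter.Eventually.of_forall fun _ => ENNReal.ofReal_lt_top), funext hdens,
    integral_indicator measurableSet_Ioo, integral_const_mul,
    integral_Ioo_rpow_mul_one_sub_rpow (by positivity) hb, show a + b + m = a + m + b by ring]
  have := (Gamma_pos_of_pos ha).ne'
  have := (Gamma_pos_of_pos hb).ne'
  have := (Gamma_pos_of_pos (add_pos ha hb)).ne'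
  have := (Gamma_pos_of_pos (by positivity : 0 < a + m + b)).ne'
  field_simp

lemma Real.Gamma_add_nat_eq_mul_prod {s : ℝ} (hs : 0 < s) (n : ℕ) :
    Gamma (s + n) = Gamma s * ∏ l ∈ range n, (s + l) := by
  induction n with
  | zero => simp
  | succ n ih =>
    rw [Nat.cast_succ, ← add_assoc, Gamma_add_one (by positivity), ih, prod_range_succ]
    ring

lemma integral_pow_betaMeasure {a b : ℝ} (ha : 0 < a) (hb : 0 < b) (m : ℕ) :
    ∫ x, x ^ m ∂(_root_.betaMeasure a b) = ∏ l ∈ range m, (a + l) / (a + b + l) := by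
  rw [integral_pow_betaMeasure_eq_Gamma ha hb, Real.Gamma_add_nat_eq_mul_prod ha,
    Real.Gamma_add_nat_eq_mul_prod (add_pos ha hb), prod_div_distrib]
  have := (Gamma_pos_of_pos ha).ne'
  have := (Gamma_pos_of_pos (add_pos ha hb)).ne'
  field_simp

lemma HasBetaLaw.integral_pow {Ω : Type*} [MeasurableSpace Ω] {μ : Measure Ω} {X : Ω → ℝ}
    {a b : ℝ} (hX : HasBetaLaw μ X a b) (ha : 0 < a) (hb : 0 < b) (m : ℕ) :
    ∫ ω, X ω ^ m ∂μ = ∏ l ∈ range m, (a + l) / (a + b + l) := by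
  rw [← integral_pow_betaMeasure ha hb m, ← hX.2,
    integral_map hX.1.aemeasurable (by fun_prop)]

lemma ProbabilityTheory.iIndepFun.integral_prod_range_comp {Ω β : Type*} [MeasurableSpace Ω]
    [MeasurableSpace β] {μ : Measure Ω} {n : ℕ} {V : ℕ → Ω → β}
    (hind : iIndepFun (fun k : Fin n => V k) μ) (hV : ∀ k < n, AEMeasurable (V k) μ)
    {f : ℕ → β → ℝ} (hf : ∀ k, Measurable (f k)) :
    ∫ ω, ∏ k ∈ range n, f k (V k ω) ∂μ = ∏ k ∈ range n, ∫ ω, f k (V k ω) ∂μ := by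
  simp only [← Fin.prod_univ_eq_prod_range]
  exact hind.integral_fun_prod_comp (fun k => hV k k.isLt) (fun k => (hf k).aestronglyMeasurable)

lemma Finset.prod_Ico_div_succ_of_ne_zero {K : Type*} [CommGroupWithZero K] (f : ℕ → K)
    {m n : ℕ} (hmn : m ≤ n) (hf : ∀ k ∈ Icc m n, f k ≠ 0) :
    ∏ k ∈ Ico m n, f k / f (k + 1) = f m / f n := by
  induction n, hmn using Nat.le_induction with
  | base => simp [div_self (hf m (by simp))]
  | succ n hmn ih =>
    rw [prod_Ico_succ_top hmn, ih fun k hk => hf k (Icc_subset_Icc_right n.le_succ hk),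
      div_mul_div_cancel₀ (hf n (by simp [hmn]))]

lemma Finset.prod_range_ite_lt {M : Type*} [CommMonoid M] (g h : ℕ → M) {m n : ℕ}
    (hmn : m ≤ n) :
    ∏ k ∈ range n, (if k < m then g k else h k) =
      (∏ k ∈ range m, g k) * ∏ k ∈ Ico m n, h k := by
  rw [← prod_range_mul_prod_Ico _ hmn]
  congr 1 <;> refine prod_congr rfl fun k hk => ?_
  · rw [if_pos (mem_range.1 hk)]
  · rw [if_neg (mem_Ico.1 hk).1.not_gt]

lemma Finset.prod_range_mul_prod_range_of_le {M : Type*} [CommMonoid M] (x : ℕ → M) {m n : ℕ}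
    (hmn : m ≤ n) :
    (∏ k ∈ range n, x k) * ∏ k ∈ range m, x k =
      ∏ k ∈ range n, x k ^ (if k < m then 2 else 1) := by
  simp only [pow_ite, pow_one]
  rw [prod_range_ite_lt _ _ hmn, ← prod_range_mul_prod_Ico x hmn, prod_pow,
    mul_right_comm, sq]

lemma prod_Ico_prod_range_add_div_add {A : ℕ → ℝ} {a b : ℕ} (hab : a ≤ b)
    (hA : ∀ k ∈ Icc a b, 0 < A k) (m : ℕ) :
    ∏ k ∈ Ico a b, ∏ l ∈ range m, (A k + l) / (A (k + 1) + l) =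
      ∏ l ∈ range m, (A a + l) / (A b + l) := by
  rw [Finset.prod_comm]
  exact prod_congr rfl fun l _ => prod_Ico_div_succ_of_ne_zero (fun k => A k + l) hab
    fun k hk => (add_pos_of_pos_of_nonneg (hA k hk) l.cast_nonneg).ne'

lemma integral_prod_range_mul_prod_range_of_hasBetaLaw {Ω : Type*} [MeasurableSpace Ω]
    {μ : Measure Ω} {m n : ℕ} {V : ℕ → Ω → ℝ} {A : ℕ → ℝ}
    (hind : iIndepFun (fun k : Fin n => V k) μ) (hA0 : 0 < A 0) (hA : ∀ k < n, A k < A (k + 1))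
    (hlaw : ∀ k < n, HasBetaLaw μ (V k) (A k) (A (k + 1) - A k)) (hmn : m ≤ n) :
    ∫ ω, (∏ k ∈ range n, V k ω) * ∏ k ∈ range m, V k ω ∂μ =
      A 0 * (A 0 + 1) / ((A m + 1) * A n) := by
  have hpos : ∀ k ≤ n, 0 < A k := by
    intro k hk
    induction k with
    | zero => exact hA0
    | succ k ih => exact (ih (by omega)).trans (hA k (by omega))
  have hmoment : ∀ k < n, ∀ e : ℕ,
      ∫ ω, V k ω ^ e ∂μ = ∏ l ∈ range e, (A k + l) / (A (k + 1) + l) := by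
    intro k hk e
    rw [(hlaw k hk).integral_pow (hpos k hk.le) (sub_pos.2 (hA k hk)), add_sub_cancel]
  calc ∫ ω, (∏ k ∈ range n, V k ω) * ∏ k ∈ range m, V k ω ∂μ
      = ∫ ω, ∏ k ∈ range n, V k ω ^ (if k < m then 2 else 1) ∂μ := by
        simp only [prod_range_mul_prod_range_of_le _ hmn]
    _ = ∏ k ∈ range n, ∫ ω, V k ω ^ (if k < m then 2 else 1) ∂μ :=
        hind.integral_prod_range_comp (fun k hk => (hlaw k hk).1.aemeasurable)
          fun k => measurable_id.pow_const _
    _ = ∏ k ∈ range n, if k < m then ∏ l ∈ range 2, (A k + l) / (A (k + 1) + l)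
          else ∏ l ∈ range 1, (A k + l) / (A (k + 1) + l) :=
        prod_congr rfl fun k hk => by rw [hmoment k (mem_range.1 hk)]; split_ifs <;> rfl
    _ = (∏ l ∈ range 2, (A 0 + l) / (A m + l)) * ∏ l ∈ range 1, (A m + l) / (A n + l) := by
        rw [prod_range_ite_lt _ _ hmn, range_eq_Ico,
          prod_Ico_prod_range_add_div_add (Nat.zero_le m)
            fun k hk => hpos k ((mem_Icc.1 hk).2.trans hmn),
          prod_Ico_prod_range_add_div_add hmn fun k hk => hpos k (mem_Icc.1 hk).2]
    _ = A 0 * (A 0 + 1) / ((A m + 1) * A n) := by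
        have := (hpos m hmn).ne'
        simp only [prod_range_succ, prod_range_zero, Nat.cast_zero, Nat.cast_one, add_zero,
          one_mul]
        field_simp

theorem H2_multivariate_crossMoment_general {Ω : Type*} [MeasurableSpace Ω] (μ : Measure Ω)
    (r : ℕ) (α : ℕ → ℝ)
    (hα : ∀ i, 1 ≤ i → i ≤ r → 0 < α i) (V : ℕ → Ω → ℝ)
    (h0 : HasBetaLaw μ (V 0) 1 (α 1))
    (hk : ∀ k, 1 ≤ k → k ≤ r - 1 →
      HasBetaLaw μ (V k) (1 + ∑ j ∈ Finset.Icc 1 k, α j) (α (k + 1)))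
    (hind : iIndepFun (fun k : Fin r => V k) μ)
    (i j : ℕ) (hi : 1 ≤ i) (hij : i < j) (hj : j ≤ r) :
    ∫ ω, (∏ k ∈ Finset.range (r - i + 1), V k ω) * (∏ k ∈ Finset.range (r - j + 1), V k ω) ∂μ =
      2 / ((2 + ∑ l ∈ Finset.Icc 1 (r - j + 1), α l) * (1 + ∑ l ∈ Finset.Icc 1 (r - i + 1), α l)) := by
  set A : ℕ → ℝ := fun k => 1 + ∑ l ∈ Icc 1 k, α l
  have hA_succ : ∀ k, A (k + 1) - A k = α (k + 1) := fun k => by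
    simp only [A, sum_Icc_succ_top (Nat.le_add_left 1 k)]
    ring
  have hn : r - i + 1 ≤ r := by omega
  rw [integral_prod_range_mul_prod_range_of_hasBetaLaw (A := A)
    (hind.precomp (Fin.castLE_injective hn)) (by simp [A])
    (fun k hkn => sub_pos.1 ((hA_succ k).symm ▸ hα (k + 1) (by omega) (by omega)))
    (fun k hkn => ?_) (by omega : r - j + 1 ≤ r - i + 1)]
  · simp only [A]
    norm_num
    ring
  · rw [hA_succ]
    rcases k with _ | k
    · simpa [A] using h0
    · exact hk (k + 1) (by omega) (by omega)

theorem H2_multivariate_crossMoment {Ω : Type*} [MeasurableSpace Ω] (μ : Measure Ω)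
    [IsProbabilityMeasure μ] (r : ℕ) (hr : 2 ≤ r) (α : ℕ → ℝ)
    (hα : ∀ i, 1 ≤ i → i ≤ r → 0 < α i) (V : ℕ → Ω → ℝ)
    (h0 : HasBetaLaw μ (V 0) 1 (α 1))
    (hk : ∀ k, 1 ≤ k → k ≤ r - 1 →
      HasBetaLaw μ (V k) (1 + ∑ j ∈ Finset.Icc 1 k, α j) (α (k + 1)))
    (hind : iIndepFun (fun k : Fin r => V k) μ)
    (i j : ℕ) (hi : 1 ≤ i) (hij : i < j) (hj : j ≤ r) :
    ∫ ω, (∏ k ∈ Finset.range (r - i + 1), V k ω) * (∏ k ∈ Finset.range (r - j + 1), V k ω) ∂μ =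
      2 / ((2 + ∑ l ∈ Finset.Icc 1 (r - j + 1), α l) * (1 + ∑ l ∈ Finset.Icc 1 (r - i + 1), α l)) :=
  H2_multivariate_crossMoment_general μ r α hα V h0 hk hind i j hi hij hj
end
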